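/- arXiv:1806.00758 — 3 statements merged into one kernel-verified Lean document; each statement's English description precedes it below -/
import Mathlib

section
/- Let Ω be a domain in ℂ, s, M > 0, and let 𝓕 be a family of holomorphic functions f : Ω → ℂ such that ∫_Ω |f|^s dm ≤ M^s for every f ∈ 𝓕. Then 𝓕 is locally uniformly bounded: for every compact K ⊆ Ω there exists C > 0 such that |f(z)| ≤ C for all f ∈ 𝓕 and z ∈ K. -/
/-!
The key estimate is local: if `f` is holomorphic near the closed disc `B̄(c, R)` and `s > 0`, then
`π R² |f c|^s ≤ 2^(2/s) ∫_{B(c,R)} |f|^s`. Integrating the circle mean value property in polar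
coordinates gives the area mean value inequality `π R² |f c| ≤ ∫_{B(c,R)} |f|`, which settles
`s ≥ 1` by Jensen's inequality. For `s < 1` we follow Hardy and Littlewood: let `w₀` maximize
`A z = (R - |z - c|)^(2/s) |f z|` on the closed disc and put `ρ = (R - |w₀ - c|) / 2`. On
`B(w₀, ρ)` the weight is at least `ρ^(2/s)`, so `|f| ≤ 2^(2/s) |f w₀|` there, hence
`|f| ≤ (2^(2/s) |f w₀|)^(1-s) |f|^s`, and the area mean value inequality at `w₀` bounds `A w₀`,
which dominates `A c = R^(2/s) |f c|`.

Every point of `K` is the centre of a disc of a fixed radius inside `Ω`, over which the integral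
of `|f|^s` is at most `M^s`.
-/

open MeasureTheory Metric Real Set

theorem le_two_rpow_mul_of_isMaxOn {X : Type*} [PseudoMetricSpace X] {u : X → ℝ} {c w₀ w : X}
    {R q : ℝ} (hq : 0 ≤ q) (hu : 0 ≤ u w)
    (hmax : IsMaxOn (fun x => (R - dist x c) ^ q * u x) (closedBall c R) w₀)
    (hw : dist w w₀ < (R - dist w₀ c) / 2) : u w ≤ 2 ^ q * u w₀ := by
  set ρ := (R - dist w₀ c) / 2
  have hρ : 0 < ρ := dist_nonneg.trans_lt hw
  have h2ρ : R - dist w₀ c = 2 * ρ := by ring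
  have hwc : ρ ≤ R - dist w c := by linarith [dist_triangle w w₀ c]
  have hwmem : w ∈ closedBall c R := by
    rw [mem_closedBall]
    linarith
  have hρq : 0 < ρ ^ q := rpow_pos_of_pos hρ q
  have key : ρ ^ q * u w ≤ ρ ^ q * (2 ^ q * u w₀) :=
    calc ρ ^ q * u w ≤ (R - dist w c) ^ q * u w := by gcongr
      _ ≤ (R - dist w₀ c) ^ q * u w₀ := hmax hwmem
      _ = ρ ^ q * (2 ^ q * u w₀) := by
        rw [h2ρ, mul_rpow zero_le_two hρ.le]
        ring
  exact le_of_mul_le_mul_left key hρq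

theorem setIntegral_le_rpow_mul_setIntegral_rpow {X : Type*} [MeasurableSpace X]
    {μ : Measure X} {u : X → ℝ} {t : Set X} {B s : ℝ} (ht : MeasurableSet t) (hs : s ≤ 1)
    (hu : ∀ x ∈ t, 0 ≤ u x ∧ u x ≤ B) (hint : IntegrableOn (fun x => u x ^ s) t μ) :
    ∫ x in t, u x ∂μ ≤ B ^ (1 - s) * ∫ x in t, u x ^ s ∂μ := by
  rw [← integral_const_mul]
  refine integral_mono_of_nonneg ((ae_restrict_iff' ht).2 (ae_of_all _ fun x hx => (hu x hx).1))
    (hint.const_mul _) ((ae_restrict_iff' ht).2 (ae_of_all _ fun x hx => ?_))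
  obtain ⟨hu0, huB⟩ := hu x hx
  rcases hu0.eq_or_lt with hzero | hpos
  · exact hzero.symm.le.trans (mul_nonneg (rpow_nonneg (hu0.trans huB) _) (rpow_nonneg hu0 _))
  · calc u x = u x ^ (1 - s) * u x ^ s := by rw [← rpow_add hpos, sub_add_cancel, rpow_one]
      _ ≤ B ^ (1 - s) * u x ^ s := by gcongr

theorem circleMap_mem_ball_iff {c : ℂ} {r R θ : ℝ} : circleMap c r θ ∈ ball c R ↔ |r| < R := by
  simp [mem_ball, dist_eq_norm, circleMap_sub_center]

theorem setIntegral_Ioo_circleMap_eq_two_pi_smul_circleAverage {E : Type*}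
    [NormedAddCommGroup E] [NormedSpace ℝ E] (g : ℂ → E) (c : ℂ) (r : ℝ) :
    ∫ θ in Ioo (-π) π, g (circleMap c r θ) = (2 * π) • circleAverage g c r := by
  rw [circleAverage_eq_integral_add (-π), smul_inv_smul₀ (by positivity),
    intervalIntegral.integral_comp_add_right (fun θ => g (circleMap c r θ)),
    intervalIntegral.integral_of_le (by linarith [pi_pos]), integral_Ioc_eq_integral_Ioo]
  congr 3 <;> ring

theorem setIntegral_ball_eq_setIntegral_polar {E : Type*} [NormedAddCommGroup E]
    [NormedSpace ℝ E] (g : ℂ → E) (c : ℂ) (R : ℝ) :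
    ∫ z in ball c R, g z = ∫ p in Ioo 0 R ×ˢ Ioo (-π) π, p.1 • g (circleMap c p.1 p.2) := by
  have hpolar : ∀ p : ℝ × ℝ, c + Complex.polarCoord.symm p = circleMap c p.1 p.2 := by
    intro p
    simp [circleMap, Complex.exp_mul_I]
  have htarget : Complex.polarCoord.target ∩ (Iio R ×ˢ univ) = Ioo 0 R ×ˢ Ioo (-π) π := by
    ext ⟨r, θ⟩
    simp [Complex.polarCoord_target]
    tauto
  calc ∫ z in ball c R, g z = ∫ w, (ball c R).indicator g (c + w) := by
        rw [← integral_indicator measurableSet_ball, integral_add_left_eq_self]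
    _ = ∫ p in Complex.polarCoord.target, (Iio R ×ˢ univ).indicator
          (fun p : ℝ × ℝ => p.1 • g (circleMap c p.1 p.2)) p := by
        rw [← Complex.integral_comp_polarCoord_symm]
        refine setIntegral_congr_fun Complex.polarCoord.open_target.measurableSet fun p hp => ?_
        have hmem : circleMap c p.1 p.2 ∈ ball c R ↔ p ∈ Iio R ×ˢ univ := by
          rw [circleMap_mem_ball_iff, abs_of_pos (show 0 < p.1 from hp.1)]
          simp
        by_cases hpR : p ∈ Iio R ×ˢ univ
        · rw [hpolar, indicator_of_mem (hmem.2 hpR), indicator_of_mem hpR]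
        · rw [hpolar, indicator_of_notMem (mt hmem.1 hpR), indicator_of_notMem hpR, smul_zero]
    _ = ∫ p in Ioo 0 R ×ˢ Ioo (-π) π, p.1 • g (circleMap c p.1 p.2) := by
        rw [setIntegral_indicator (measurableSet_Iio.prod MeasurableSet.univ), htarget]

theorem mul_le_setIntegral_ball_of_le_circleAverage {g : ℂ → ℝ} {c : ℂ} {R a : ℝ} (hR : 0 < R)
    (hg : ContinuousOn g (closedBall c R)) (h : ∀ r ∈ Ioo 0 R, a ≤ circleAverage g c r) :
    π * R ^ 2 * a ≤ ∫ z in ball c R, g z := by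
  set F : ℝ × ℝ → ℝ := fun p => p.1 • g (circleMap c p.1 p.2)
  have hF : IntegrableOn F (Ioo 0 R ×ˢ Ioo (-π) π) := by
    have hcont : ContinuousOn F (Icc 0 R ×ˢ Icc (-π) π) := by
      refine continuous_fst.continuousOn.smul (hg.comp (by fun_prop) ?_)
      rintro ⟨r, θ⟩ ⟨⟨hr0, hrR⟩, -⟩
      exact closedBall_subset_closedBall hrR (circleMap_mem_closedBall c hr0 θ)
    exact (hcont.integrableOn_compact (isCompact_Icc.prod isCompact_Icc)).mono_set
      (prod_mono Ioo_subset_Icc_self Ioo_subset_Icc_self)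
  have hradial : IntegrableOn (fun r => ∫ θ in Ioo (-π) π, F (r, θ)) (Ioo 0 R) := by
    rw [IntegrableOn, Measure.volume_eq_prod, ← Measure.prod_restrict] at hF
    exact hF.integral_prod_left
  have hcircle : ∀ r ∈ Ioo 0 R, 2 * π * a * r ≤ ∫ θ in Ioo (-π) π, F (r, θ) := by
    intro r hr
    rw [integral_smul, setIntegral_Ioo_circleMap_eq_two_pi_smul_circleAverage, smul_eq_mul,
      smul_eq_mul]
    have := mul_le_mul_of_nonneg_left (h r hr) (by have := hr.1; positivity : 0 ≤ 2 * π * r)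
    linarith
  calc π * R ^ 2 * a = ∫ r in Ioo 0 R, 2 * π * a * r := by
        rw [integral_const_mul, ← integral_Ioc_eq_integral_Ioo,
          ← intervalIntegral.integral_of_le hR.le, integral_id]
        ring
    _ ≤ ∫ r in Ioo 0 R, ∫ θ in Ioo (-π) π, F (r, θ) :=
        setIntegral_mono_on ((continuous_const_mul _).integrableOn_Icc.mono_set Ioo_subset_Icc_self)
          hradial measurableSet_Ioo hcircle
    _ = ∫ z in ball c R, g z := by
        rw [setIntegral_ball_eq_setIntegral_polar, Measure.volume_eq_prod,
          setIntegral_prod F (by rwa [← Measure.volume_eq_prod])]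

section

variable {E : Type*} [NormedAddCommGroup E] [NormedSpace ℂ E] {f : ℂ → E} {c : ℂ} {R : ℝ}

theorem norm_circleAverage_le (f : ℂ → E) (c : ℂ) (r : ℝ) :
    ‖circleAverage f c r‖ ≤ circleAverage (‖f ·‖) c r := by
  rw [circleAverage_def, circleAverage_def, norm_smul, smul_eq_mul, norm_inv,
    Real.norm_of_nonneg (by positivity)]
  gcongr
  exact intervalIntegral.norm_integral_le_integral_norm (by positivity)

theorem DiffContOnCl.integrableOn_norm_rpow_ball {s : ℝ} (hs : 0 ≤ s)
    (hf : DiffContOnCl ℂ f (ball c R)) : IntegrableOn (fun z => ‖f z‖ ^ s) (ball c R) :=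
  ((hf.continuousOn_ball.norm.rpow_const fun _ _ => Or.inr hs).integrableOn_compact
    (isCompact_closedBall c R)).mono_set ball_subset_closedBall

variable [CompleteSpace E]

theorem DiffContOnCl.mul_norm_le_setIntegral_norm_ball (hR : 0 < R)
    (hf : DiffContOnCl ℂ f (ball c R)) : π * R ^ 2 * ‖f c‖ ≤ ∫ z in ball c R, ‖f z‖ :=
  mul_le_setIntegral_ball_of_le_circleAverage hR hf.continuousOn_ball.norm fun r hr =>
    (hf.mono (ball_subset_ball (abs_of_pos hr.1 ▸ hr.2.le))).circleAverage ▸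
      norm_circleAverage_le f c r

theorem DiffContOnCl.mul_norm_rpow_le_setIntegral_norm_rpow_ball_of_one_le {s : ℝ} (hs : 1 ≤ s)
    (hR : 0 < R) (hf : DiffContOnCl ℂ f (ball c R)) :
    π * R ^ 2 * ‖f c‖ ^ s ≤ ∫ z in ball c R, ‖f z‖ ^ s := by
  have hvol : volume.real (ball c R) = π * R ^ 2 := by
    simp [Measure.real, ENNReal.toReal_ofReal hR.le, mul_comm]
  have hvol_pos : 0 < π * R ^ 2 := by positivity
  have hmean : ‖f c‖ ≤ ⨍ z in ball c R, ‖f z‖ := by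
    rw [setAverage_eq, hvol, smul_eq_mul, le_inv_mul_iff₀ hvol_pos]
    exact hf.mul_norm_le_setIntegral_norm_ball hR
  have hjensen : (⨍ z in ball c R, ‖f z‖) ^ s ≤ ⨍ z in ball c R, ‖f z‖ ^ s :=
    (convexOn_rpow hs).map_set_average_le (continuousOn_id.rpow_const fun _ _ => Or.inr
      (by linarith)) isClosed_Ici (measure_ball_pos volume c hR).ne' measure_ball_lt_top.ne
      (ae_of_all _ fun z => norm_nonneg (f z))
      (by simpa using hf.integrableOn_norm_rpow_ball zero_le_one)
      (hf.integrableOn_norm_rpow_ball (by linarith))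
  rw [setAverage_eq (f := fun z => ‖f z‖ ^ s), hvol, smul_eq_mul] at hjensen
  rw [← le_inv_mul_iff₀ hvol_pos]
  exact (rpow_le_rpow (norm_nonneg _) hmean (by linarith)).trans hjensen

theorem DiffContOnCl.mul_norm_rpow_le_of_norm_le {w : ℂ} {ρ s K : ℝ} (hs : 0 < s) (hs1 : s ≤ 1)
    (hρ : 0 < ρ) (hf : DiffContOnCl ℂ f (ball w ρ)) (hK : 0 ≤ K)
    (hbound : ∀ z ∈ ball w ρ, ‖f z‖ ≤ K * ‖f w‖) :
    π * ρ ^ 2 * ‖f w‖ ^ s ≤ K ^ (1 - s) * ∫ z in ball w ρ, ‖f z‖ ^ s := by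
  rcases (norm_nonneg (f w)).eq_or_lt with hzero | hpos
  · rw [← hzero, zero_rpow hs.ne', mul_zero]
    exact mul_nonneg (rpow_nonneg hK _) (by positivity)
  have hmain : π * ρ ^ 2 * ‖f w‖ ≤ (K * ‖f w‖) ^ (1 - s) * ∫ z in ball w ρ, ‖f z‖ ^ s :=
    (hf.mul_norm_le_setIntegral_norm_ball hρ).trans
      (setIntegral_le_rpow_mul_setIntegral_rpow measurableSet_ball hs1
        (fun z hz => ⟨norm_nonneg _, hbound z hz⟩) (hf.integrableOn_norm_rpow_ball hs.le))
  rw [mul_rpow hK hpos.le] at hmain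
  refine le_of_mul_le_mul_right ?_ (rpow_pos_of_pos hpos (1 - s))
  calc π * ρ ^ 2 * ‖f w‖ ^ s * ‖f w‖ ^ (1 - s) = π * ρ ^ 2 * ‖f w‖ := by
        rw [mul_assoc, ← rpow_add hpos, add_sub_cancel, rpow_one]
    _ ≤ _ := hmain
    _ = _ := by ring

theorem DiffContOnCl.mul_norm_rpow_le_setIntegral_norm_rpow_ball_of_le_one {s : ℝ} (hs : 0 < s)
    (hs1 : s ≤ 1) (hR : 0 < R) (hf : DiffContOnCl ℂ f (ball c R)) :
    π * R ^ 2 * ‖f c‖ ^ s ≤ 2 ^ (2 / s) * ∫ z in ball c R, ‖f z‖ ^ s := by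
  have hpow : ∀ x : ℝ, 0 ≤ x → (x ^ (2 / s)) ^ s = x ^ 2 := fun x hx => by
    rw [← rpow_mul hx, div_mul_cancel₀ _ hs.ne', rpow_two]
  set W : ℂ → ℝ := fun z => (R - dist z c) ^ (2 / s) * ‖f z‖
  have hWcont : ContinuousOn W (closedBall c R) :=
    ((continuous_const.sub (continuous_id.dist continuous_const)).continuousOn.rpow_const
      fun _ _ => Or.inr (by positivity)).mul hf.continuousOn_ball.norm
  obtain ⟨w₀, hw₀, hmax⟩ := (isCompact_closedBall c R).exists_isMaxOn
    ⟨c, mem_closedBall_self hR.le⟩ hWcont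
  have hmax_bound : π * W w₀ ^ s ≤ 2 ^ (2 / s) * ∫ z in ball c R, ‖f z‖ ^ s := by
    rcases (mem_closedBall.1 hw₀).eq_or_lt with hedge | hin
    · simp only [W, hedge, sub_self, zero_rpow (div_pos two_pos hs).ne', zero_mul,
        zero_rpow hs.ne', mul_zero]
      positivity
    set ρ := (R - dist w₀ c) / 2
    have hρ : 0 < ρ := by simp only [ρ]; linarith
    have hball : ball w₀ ρ ⊆ ball c R := ball_subset_ball' (by simp only [ρ]; linarith)
    have hlocal := (hf.mono hball).mul_norm_rpow_le_of_norm_le hs hs1 hρ (by positivity)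
      fun z hz => le_two_rpow_mul_of_isMaxOn (u := (‖f ·‖)) (by positivity) (norm_nonneg _) hmax hz
    have hmono : ∫ z in ball w₀ ρ, ‖f z‖ ^ s ≤ ∫ z in ball c R, ‖f z‖ ^ s :=
      setIntegral_mono_set (hf.integrableOn_norm_rpow_ball hs.le)
        (ae_of_all _ fun z => rpow_nonneg (norm_nonneg _) s) hball.eventuallyLE
    have hWs : W w₀ ^ s = 4 * (ρ ^ 2 * ‖f w₀‖ ^ s) := by
      rw [mul_rpow (by positivity) (norm_nonneg _), show R - dist w₀ c = 2 * ρ by ring,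
        hpow _ (by positivity)]
      ring
    have hconst : 4 * (2 ^ (2 / s) : ℝ) ^ (1 - s) = 2 ^ (2 / s) := by
      rw [← rpow_mul zero_le_two, show (4 : ℝ) = 2 ^ (2 : ℝ) by norm_num, ← rpow_add two_pos]
      congr 1
      field_simp
      ring
    calc π * W w₀ ^ s = 4 * (π * ρ ^ 2 * ‖f w₀‖ ^ s) := by rw [hWs]; ring
      _ ≤ 4 * ((2 ^ (2 / s)) ^ (1 - s) * ∫ z in ball c R, ‖f z‖ ^ s) := by
        have := hlocal.trans (mul_le_mul_of_nonneg_left hmono (by positivity))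
        linarith
      _ = 2 ^ (2 / s) * ∫ z in ball c R, ‖f z‖ ^ s := by rw [← mul_assoc, hconst]
  have hcenter : R ^ (2 / s) * ‖f c‖ ≤ W w₀ := by
    simpa [W] using hmax (mem_closedBall_self hR.le)
  calc π * R ^ 2 * ‖f c‖ ^ s = π * (R ^ (2 / s) * ‖f c‖) ^ s := by
        rw [mul_rpow (by positivity) (norm_nonneg _), hpow R hR.le, mul_assoc]
    _ ≤ π * W w₀ ^ s := by gcongr
    _ ≤ 2 ^ (2 / s) * ∫ z in ball c R, ‖f z‖ ^ s := hmax_bound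

theorem DiffContOnCl.mul_norm_rpow_le_setIntegral_norm_rpow_ball {s : ℝ} (hs : 0 < s)
    (hR : 0 < R) (hf : DiffContOnCl ℂ f (ball c R)) :
    π * R ^ 2 * ‖f c‖ ^ s ≤ 2 ^ (2 / s) * ∫ z in ball c R, ‖f z‖ ^ s := by
  rcases le_total s 1 with hs1 | hs1
  · exact hf.mul_norm_rpow_le_setIntegral_norm_rpow_ball_of_le_one hs hs1 hR
  · exact (hf.mul_norm_rpow_le_setIntegral_norm_rpow_ball_of_one_le hs1 hR).trans
      (le_mul_of_one_le_left (by positivity) (one_le_rpow one_le_two (by positivity)))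

end

theorem stmt2_general (Ω : Set ℂ) (hΩ : IsOpen Ω) (s M : ℝ) (hs : 0 < s) (hM : 0 < M)
    (𝓕 : Set (ℂ → ℂ)) (hhol : ∀ f ∈ 𝓕, DifferentiableOn ℂ f Ω)
    (hbound : ∀ f ∈ 𝓕, (IntegrableOn (fun z => ‖f z‖ ^ s) Ω volume ∧
      ∫ z in Ω, ‖f z‖ ^ s ∂volume ≤ M ^ s)) :
    ∀ K : Set ℂ, IsCompact K → K ⊆ Ω →
      ∃ C > 0, ∀ f ∈ 𝓕, ∀ z ∈ K, ‖f z‖ ≤ C := by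
  intro K hK hKΩ
  obtain ⟨R, hR, hRΩ⟩ := hK.exists_cthickening_subset_open hΩ hKΩ
  have hball : ∀ z ∈ K, closedBall z R ⊆ Ω := fun z hz =>
    (closedBall_subset_cthickening hz R).trans hRΩ
  refine ⟨(2 ^ (2 / s) * M ^ s / (π * R ^ 2)) ^ s⁻¹, by positivity, fun f hf z hz => ?_⟩
  have hlocal := ((hhol f hf).diffContOnCl_ball
    (hball z hz)).mul_norm_rpow_le_setIntegral_norm_rpow_ball hs hR
  have hintegral : ∫ w in ball z R, ‖f w‖ ^ s ≤ M ^ s :=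
    (setIntegral_mono_set (hbound f hf).1 (ae_of_all _ fun w => rpow_nonneg (norm_nonneg _) s)
      (ball_subset_closedBall.trans (hball z hz)).eventuallyLE).trans (hbound f hf).2
  rw [le_rpow_inv_iff_of_pos (norm_nonneg _) (by positivity) hs, le_div_iff₀ (by positivity)]
  calc ‖f z‖ ^ s * (π * R ^ 2) = π * R ^ 2 * ‖f z‖ ^ s := mul_comm _ _
    _ ≤ 2 ^ (2 / s) * ∫ w in ball z R, ‖f w‖ ^ s := hlocal
    _ ≤ 2 ^ (2 / s) * M ^ s := by gcongr

theorem stmt2 (Ω : Set ℂ) (hΩ : IsOpen Ω) (hconn : IsConnected Ω)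
    (hproper : Ωᶜ.Nonempty) (s M : ℝ) (hs : 0 < s) (hM : 0 < M)
    (𝓕 : Set (ℂ → ℂ)) (hhol : ∀ f ∈ 𝓕, DifferentiableOn ℂ f Ω)
    (hbound : ∀ f ∈ 𝓕, (IntegrableOn (fun z => ‖f z‖ ^ s) Ω volume ∧
      ∫ z in Ω, ‖f z‖ ^ s ∂volume ≤ M ^ s)) :
    ∀ K : Set ℂ, IsCompact K → K ⊆ Ω →
      ∃ C > 0, ∀ f ∈ 𝓕, ∀ z ∈ K, ‖f z‖ ≤ C :=
  stmt2_general Ω hΩ s M hs hM 𝓕 hhol hbound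
end

section
/- Let f : 𝔻(b,d) → ℂ be holomorphic. Then (3/8) d² log⁺|f(b)| ≤ (1/2π) ∫_{A} log⁺|f| dm, where A = {z : d/2 < |z - b| < d} and m is Lebesgue area measure (assuming the integral is finite). -/
/-!
By Jensen's formula, `log ‖f‖` is subharmonic: `log ‖f b‖` is at most its average over any circle
`|z - b| = r < d`, and hence so is `log⁺ ‖f b‖` for the average of `log⁺ ‖f‖`. Integrating
`r · log⁺ ‖f b‖ ≤ r · (circle average)` in polar coordinates over `d/2 < r < d` gives
`π (d² - d²/4) log⁺ ‖f b‖ ≤ ∫_A log⁺ ‖f‖ dm`.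
-/

open MeasureTheory Metric Real Set

theorem AnalyticOnNhd.log_norm_le_circleAverage {c : ℂ} {R : ℝ} {f : ℂ → ℂ} (hR : R ≠ 0)
    (hf : AnalyticOnNhd ℂ f (closedBall c |R|)) (hfc : f c ≠ 0) :
    Real.log ‖f c‖ ≤ circleAverage (Real.log ‖f ·‖) c R := by
  rw [hf.circleAverage_log_norm hR hfc]
  refine le_add_of_nonneg_left (finsum_nonneg fun u ↦ ?_)
  by_cases hu : u ∈ closedBall c |R|
  · refine mul_nonneg (mod_cast MeromorphicOn.AnalyticOnNhd.divisor_nonneg hf u) ?_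
    rcases eq_or_ne u c with rfl | huc
    · simp
    rw [← Real.log_abs]
    apply Real.log_nonneg
    have : 0 < ‖c - u‖ := norm_pos_iff.2 (sub_ne_zero.2 huc.symm)
    rw [mem_closedBall, dist_eq_norm'] at hu
    rw [abs_mul, abs_inv, abs_norm, ← div_eq_mul_inv, one_le_div this]
    exact hu
  · simp [hu]

theorem AnalyticOnNhd.posLog_norm_le_circleAverage {c : ℂ} {R : ℝ} {f : ℂ → ℂ} (hR : R ≠ 0)
    (hf : AnalyticOnNhd ℂ f (closedBall c |R|)) :
    log⁺ ‖f c‖ ≤ circleAverage (log⁺ ‖f ·‖) c R := by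
  have hnonneg : 0 ≤ circleAverage (log⁺ ‖f ·‖) c R :=
    circleAverage_nonneg_of_nonneg fun _ _ ↦ posLog_nonneg
  by_cases hfc : f c = 0
  · simpa [hfc] using hnonneg
  refine max_le hnonneg ((hf.log_norm_le_circleAverage hR hfc).trans (circleAverage_mono ?_ ?_ ?_))
  · exact (hf.mono sphere_subset_closedBall).meromorphicOn.circleIntegrable_log_norm
  · exact (continuous_posLog.comp_continuousOn
      (hf.continuousOn.mono sphere_subset_closedBall).norm).circleIntegrable'
  · exact fun _ _ ↦ le_max_right _ _

def annulus (c : ℂ) (r₁ r₂ : ℝ) : Set ℂ := {z | r₁ < dist z c ∧ dist z c < r₂}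

theorem measurableSet_annulus (c : ℂ) (r₁ r₂ : ℝ) : MeasurableSet (annulus c r₁ r₂) :=
  (measurableSet_lt measurable_const (measurable_id.dist measurable_const)).inter
    (measurableSet_lt (measurable_id.dist measurable_const) measurable_const)

theorem sphere_subset_annulus {c : ℂ} {r₁ r₂ r : ℝ} (hr : r ∈ Ioo r₁ r₂) :
    sphere c r ⊆ annulus c r₁ r₂ := fun z hz ↦ by
  rw [mem_sphere] at hz
  exact ⟨hz ▸ hr.1, hz ▸ hr.2⟩

theorem Complex.polarCoord_symm_eq_circleMap (p : ℝ × ℝ) :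
    Complex.polarCoord.symm p = circleMap 0 p.1 p.2 := by
  simp [circleMap, Complex.exp_mul_I, ← Complex.ofReal_cos, ← Complex.ofReal_sin]

theorem continuous_circleMap_uncurry (c : ℂ) :
    Continuous fun p : ℝ × ℝ ↦ circleMap c p.1 p.2 := by
  unfold circleMap; fun_prop

theorem lintegral_annulus_eq_polar {G : ℂ → ENNReal} (hG : Measurable G) (c : ℂ) {r₁ r₂ : ℝ}
    (hr₁ : 0 ≤ r₁) :
    ∫⁻ z in annulus c r₁ r₂, G z =
      ∫⁻ r in Ioo r₁ r₂, ENNReal.ofReal r * ∫⁻ θ in Ioo (-π) π, G (circleMap c r θ) := by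
  set A := annulus c r₁ r₂
  set S := Ioo r₁ r₂ ×ˢ Ioo (-π) π
  have hA : MeasurableSet A := measurableSet_annulus c r₁ r₂
  have hS : MeasurableSet S := measurableSet_Ioo.prod measurableSet_Ioo
  have hST : S ⊆ polarCoord.target := fun p hp ↦ ⟨hr₁.trans_lt hp.1.1, hp.2⟩
  have hmem : ∀ p ∈ polarCoord.target, c + Complex.polarCoord.symm p ∈ A ↔ p ∈ S := by
    rintro ⟨r, θ⟩ ⟨hr, hθ⟩
    simp only [A, S, annulus, mem_ofPred_eq, dist_self_add_left, Complex.norm_polarCoord_symm,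
      abs_of_pos (show 0 < r from hr), mem_prod, mem_Ioo, hθ, and_true]
  calc ∫⁻ z in A, G z = ∫⁻ w, A.indicator G (c + w) := by
        rw [lintegral_add_left_eq_self, lintegral_indicator hA]
    _ = ∫⁻ p in polarCoord.target,
          ENNReal.ofReal p.1 • A.indicator G (c + Complex.polarCoord.symm p) :=
        (Complex.lintegral_comp_polarCoord_symm _).symm
    _ = ∫⁻ p in polarCoord.target,
          S.indicator (fun p ↦ ENNReal.ofReal p.1 * G (circleMap c p.1 p.2)) p := by
        refine setLIntegral_congr_fun polarCoord.open_target.measurableSet fun p hp ↦ ?_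
        by_cases hpS : p ∈ S
        · rw [indicator_of_mem hpS, indicator_of_mem ((hmem p hp).2 hpS), smul_eq_mul,
            Complex.polarCoord_symm_eq_circleMap, circleMap_zero, circleMap]
        · rw [indicator_of_notMem hpS, indicator_of_notMem (mt (hmem p hp).1 hpS), smul_zero]
    _ = ∫⁻ p in S, ENNReal.ofReal p.1 * G (circleMap c p.1 p.2) := by
        rw [setLIntegral_indicator hS, inter_eq_left.2 hST]
    _ = ∫⁻ r in Ioo r₁ r₂, ENNReal.ofReal r * ∫⁻ θ in Ioo (-π) π, G (circleMap c r θ) := by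
        rw [Measure.volume_eq_prod, setLIntegral_prod]
        · refine setLIntegral_congr_fun measurableSet_Ioo fun r _ ↦ ?_
          dsimp only
          exact lintegral_const_mul _ (hG.comp (measurable_circleMap c r))
        · exact (measurable_fst.ennreal_ofReal.mul
            (hG.comp (continuous_circleMap_uncurry c).measurable)).aemeasurable

theorem lintegral_Ioo_circleMap_eq_circleAverage {g : ℂ → ℝ} {c : ℂ} {r : ℝ}
    (hg : ContinuousOn g (sphere c |r|)) (hg₀ : ∀ z ∈ sphere c |r|, 0 ≤ g z) :
    ∫⁻ θ in Ioo (-π) π, ENNReal.ofReal (g (circleMap c r θ)) =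
      ENNReal.ofReal (2 * π * circleAverage g c r) := by
  have hcont : Continuous fun θ ↦ g (circleMap c r θ) :=
    hg.comp_continuous (continuous_circleMap c r) (circleMap_mem_sphere' c r)
  rw [← ofReal_integral_eq_lintegral_ofReal (hcont.integrableOn_Icc.mono_set Ioo_subset_Icc_self)
    (Filter.Eventually.of_forall fun θ ↦ hg₀ _ (circleMap_mem_sphere' c r θ))]
  -- the angles `(-π, π)` of polar coordinates are a shift of `(0, 2π)` by `-π`
  rw [circleAverage_eq_integral_add (-π), smul_eq_mul, ← mul_assoc,
    mul_inv_cancel₀ two_pi_pos.ne', one_mul,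
    intervalIntegral.integral_comp_add_right (fun θ ↦ g (circleMap c r θ)), zero_add,
    show 2 * π + -π = π by ring, intervalIntegral.integral_of_le (by linarith [pi_pos]),
    integral_Ioc_eq_integral_Ioo]

theorem ContinuousOn.lintegral_annulus_eq_circleAverage {g : ℂ → ℝ} {c : ℂ} {r₁ r₂ : ℝ}
    (hg : ContinuousOn g (annulus c r₁ r₂)) (hg₀ : ∀ z ∈ annulus c r₁ r₂, 0 ≤ g z)
    (hr₁ : 0 ≤ r₁) :
    ∫⁻ z in annulus c r₁ r₂, ENNReal.ofReal (g z) =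
      ∫⁻ r in Ioo r₁ r₂, ENNReal.ofReal (2 * π * r * circleAverage g c r) := by
  have hA := measurableSet_annulus c r₁ r₂
  set G := (annulus c r₁ r₂).indicator fun z ↦ ENNReal.ofReal (g z)
  have hG : Measurable G := by
    classical
    exact (ENNReal.continuous_ofReal.comp_continuousOn hg).measurable_piecewise
      continuousOn_const hA
  calc ∫⁻ z in annulus c r₁ r₂, ENNReal.ofReal (g z) = ∫⁻ z in annulus c r₁ r₂, G z :=
        setLIntegral_congr_fun hA fun z hz ↦ (indicator_of_mem hz (ENNReal.ofReal ∘ g)).symm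
    _ = ∫⁻ r in Ioo r₁ r₂, ENNReal.ofReal (2 * π * r * circleAverage g c r) := by
        rw [lintegral_annulus_eq_polar hG c hr₁]
        refine setLIntegral_congr_fun measurableSet_Ioo fun r hr ↦ ?_
        have hr₀ : 0 < r := hr₁.trans_lt hr.1
        have hsub : sphere c |r| ⊆ annulus c r₁ r₂ := by
          rw [abs_of_pos hr₀]; exact sphere_subset_annulus hr
        rw [setLIntegral_congr_fun measurableSet_Ioo fun θ _ ↦
          indicator_of_mem (hsub (circleMap_mem_sphere' c r θ)) _,
          lintegral_Ioo_circleMap_eq_circleAverage (hg.mono hsub) fun z hz ↦ hg₀ z (hsub hz),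
          ← ENNReal.ofReal_mul hr₀.le]
        congr 1
        ring

theorem mul_le_setIntegral_annulus_of_le_circleAverage {g : ℂ → ℝ} {c : ℂ} {r₁ r₂ L : ℝ}
    (hg : ContinuousOn g (annulus c r₁ r₂)) (hg₀ : ∀ z ∈ annulus c r₁ r₂, 0 ≤ g z)
    (hint : IntegrableOn g (annulus c r₁ r₂)) (hr₁ : 0 ≤ r₁) (hr : r₁ ≤ r₂) (hL : 0 ≤ L)
    (hLg : ∀ r ∈ Ioo r₁ r₂, L ≤ circleAverage g c r) :
    π * (r₂ ^ 2 - r₁ ^ 2) * L ≤ ∫ z in annulus c r₁ r₂, g z := by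
  have hA := measurableSet_annulus c r₁ r₂
  have hlin : ∫ r in Ioo r₁ r₂, 2 * π * r * L = π * (r₂ ^ 2 - r₁ ^ 2) * L := by
    rw [← integral_Ioc_eq_integral_Ioo, ← intervalIntegral.integral_of_le hr]
    simp only [mul_comm _ L, ← mul_assoc]
    rw [intervalIntegral.integral_const_mul, integral_id]
    ring
  rw [← ENNReal.ofReal_le_ofReal_iff (setIntegral_nonneg hA hg₀), ← hlin,
    ofReal_integral_eq_lintegral_ofReal ?_ ?_,
    ofReal_integral_eq_lintegral_ofReal hint ((ae_restrict_iff' hA).2 (.of_forall hg₀)),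
    hg.lintegral_annulus_eq_circleAverage hg₀ hr₁]
  · refine setLIntegral_mono' measurableSet_Ioo fun r hr ↦ ENNReal.ofReal_le_ofReal ?_
    have hr₀ : 0 < r := hr₁.trans_lt hr.1
    gcongr
    exact hLg r hr
  · exact (continuous_const.mul continuous_id |>.mul continuous_const).integrableOn_Icc.mono_set
      Ioo_subset_Icc_self
  · exact (ae_restrict_iff' measurableSet_Ioo).2 (.of_forall fun r hr ↦ by
      have hr₀ : 0 < r := hr₁.trans_lt hr.1
      positivity)

theorem stmt8 (b : ℂ) (d : ℝ) (hd : 0 < d)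
    (f : ℂ → ℂ) (hf : DifferentiableOn ℂ f (ball b d))
    (hint : IntegrableOn (fun z => max (Real.log ‖f z‖) 0)
      {z : ℂ | d / 2 < dist z b ∧ dist z b < d} volume) :
    (3 / 8) * d ^ 2 * max (Real.log ‖f b‖) 0 ≤
      (1 / (2 * Real.pi)) *
        ∫ z in {z : ℂ | d / 2 < dist z b ∧ dist z b < d},
          max (Real.log ‖f z‖) 0 ∂volume := by
  have hposLog : (fun z ↦ max (Real.log ‖f z‖) 0) = (log⁺ ‖f ·‖) :=
    funext fun z ↦ max_comm _ _
  have hmean : ∀ r ∈ Ioo (d / 2) d, log⁺ ‖f b‖ ≤ circleAverage (log⁺ ‖f ·‖) b r := by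
    intro r hr
    have hr₀ : 0 < r := by linarith [hr.1]
    refine ((hf.analyticOnNhd isOpen_ball).mono ?_).posLog_norm_le_circleAverage hr₀.ne'
    exact closedBall_subset_ball (by rw [abs_of_pos hr₀]; exact hr.2)
  have hcont : ContinuousOn (log⁺ ‖f ·‖) (annulus b (d / 2) d) :=
    (continuous_posLog.comp_continuousOn hf.continuousOn.norm).mono fun z hz ↦ hz.2
  have harea := mul_le_setIntegral_annulus_of_le_circleAverage hcont (fun _ _ ↦ posLog_nonneg)
    (hposLog ▸ hint) (by positivity) (by linarith) posLog_nonneg hmean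
  rw [hposLog, max_comm, ← posLog_apply, one_div_mul_eq_div, le_div_iff₀ two_pi_pos]
  calc 3 / 8 * d ^ 2 * log⁺ ‖f b‖ * (2 * π) = π * (d ^ 2 - (d / 2) ^ 2) * log⁺ ‖f b‖ := by ring
    _ ≤ _ := harea
end

section
/- Suppose h₁ = f_x and h₂ = f_y both satisfy the ℝ-linear Beltrami equation h_{z̄} = μ h_z + ν \overline{h_z} a.e. in Ω, where μ, ν : Ω → ℂ are measurable with |μ| + |ν| ≤ k < 1 a.e., and f ∈ W^{2,1}_loc(Ω). Then h = f_z = (f_x − i f_y)/2 satisfies a.e. the equation (1 − |ν|²) h_{z̄} = μ h_z + μ̄ ν \overline{h_z}. -/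
open Complex ComplexConjugate

/-!
With `h_z = (A - iC)/2` and `h_z̄ = (B - iD)/2`, the combination `(f_x - i f_y)/2` of the two
Beltrami equations reads `h_z̄ = μ h_z + ν conj((A + iC)/2)`, and commuting the mixed derivatives
turns the last term into `ν conj(h_z̄)`. Conjugating `h_z̄ = μ h_z + ν conj(h_z̄)` and substituting
it back into itself eliminates `conj(h_z̄)` at the cost of the factor `1 - |ν|²`.
-/

theorem sub_I_mul_div_two_eq_of_beltrami {μ ν A B C D : ℂ}
    (hx : B = μ * A + ν * conj A) (hy : D = μ * C + ν * conj C) :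
    (B - I * D) / 2 = μ * ((A - I * C) / 2) + ν * conj ((A + I * C) / 2) := by
  simp only [map_div₀, map_add, map_mul, conj_I, map_ofNat]
  linear_combination hx / 2 - I / 2 * hy

theorem one_sub_norm_sq_mul_eq_of_eq_add_mul_conj {K : Type*} [RCLike K] {μ ν a b : K}
    (hb : b = μ * a + ν * conj b) :
    ((1 - ‖ν‖ ^ 2 : ℝ) : K) * b = μ * a + conj μ * ν * conj a := by
  have hb_conj : conj b = conj μ * conj a + conj ν * b := by
    simpa using congrArg conj hb
  rw [RCLike.ofReal_sub, RCLike.ofReal_one, RCLike.ofReal_pow, ← RCLike.mul_conj]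
  linear_combination hb + ν * hb_conj

theorem stmt13_general (μ ν : ℂ)
    (A B C D : ℂ)
    (hx : B = μ * A + ν * (starRingEnd ℂ) A)
    (hy : D = μ * C + ν * (starRingEnd ℂ) C)
    (hcomm : (A + Complex.I * C) / 2 = (B - Complex.I * D) / 2) :
    ((1 - ‖ν‖ ^ 2 : ℝ) : ℂ) * ((B - Complex.I * D) / 2) =
      μ * ((A - Complex.I * C) / 2) +
        (starRingEnd ℂ) μ * ν * (starRingEnd ℂ) ((A - Complex.I * C) / 2) := by
  have h_beltrami := sub_I_mul_div_two_eq_of_beltrami hx hy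
  rw [hcomm] at h_beltrami
  exact one_sub_norm_sq_mul_eq_of_eq_add_mul_conj h_beltrami

/-- pointwise algebraic form.  At a point, write
`A = (f_x)_z`, `B = (f_x)_z̄`, `C = (f_y)_z`, `D = (f_y)_z̄`.  If `f_x` and `f_y`
satisfy the ℝ-linear Beltrami equation `h_z̄ = μ h_z + ν conj(h_z)` (so `B = μA + ν conj A`
and `D = μC + ν conj C`), and the mixed Wirtinger derivatives commute
(`(f_z̄)_z = (f_z)_z̄`, i.e. `(A + iC)/2 = (B - iD)/2`), then `h = f_z` satisfies
`(1 - |ν|²) h_z̄ = μ h_z + conj μ · ν · conj(h_z)`, where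
`h_z = (A - iC)/2` and `h_z̄ = (B - iD)/2`. -/
theorem stmt13 (μ ν : ℂ) (k : ℝ) (hk : ‖μ‖ + ‖ν‖ ≤ k) (hk1 : k < 1)
    (A B C D : ℂ)
    (hx : B = μ * A + ν * (starRingEnd ℂ) A)
    (hy : D = μ * C + ν * (starRingEnd ℂ) C)
    (hcomm : (A + Complex.I * C) / 2 = (B - Complex.I * D) / 2) :
    ((1 - ‖ν‖ ^ 2 : ℝ) : ℂ) * ((B - Complex.I * D) / 2) =
      μ * ((A - Complex.I * C) / 2) +
        (starRingEnd ℂ) μ * ν * (starRingEnd ℂ) ((A - Complex.I * C) / 2) :=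
  stmt13_general μ ν A B C D hx hy hcomm
end
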